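/- arXiv:1002.3910 — 4 statements merged into one kernel-verified Lean document; each statement's English description precedes it below -/
import Mathlib

section
/- Let 1 ≤ k < n/2 and let G be the digraph on vertex set I ∪ K, where |I| = k, |K| = n - k, I and K are disjoint, constructed as follows: there are no edges inside I; between any two vertices of K there are edges in both directions; a fixed set X ⊆ K with |X| = k is joined to I by all possible edges in both directions; and there are no other edges. Then G is strongly connected, G contains no Hamilton cycle, and both the indegree sequence and the outdegree sequence of G consist of k copies of k, followed by n - 2k copies of n - 1 - k, followed by k copies of n - 1. -/
open Finset

/-- Outdegree of a vertex in a digraph. -/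
def Digraph.outDeg {V : Type*} [Fintype V] (G : Digraph V) [DecidableRel G.Adj] (v : V) : ℕ :=
  (Finset.univ.filter fun u => G.Adj v u).card

/-- Indegree of a vertex in a digraph. -/
def Digraph.inDeg {V : Type*} [Fintype V] (G : Digraph V) [DecidableRel G.Adj] (v : V) : ℕ :=
  (Finset.univ.filter fun u => G.Adj u v).card

/-- A Hamilton cycle of a digraph `G` on a finite vertex set. -/
def Digraph.IsHamiltonian {V : Type*} [Fintype V] (G : Digraph V) : Prop :=
  ∃ f : ZMod (Fintype.card V) → V, Function.Bijective f ∧ ∀ i, G.Adj (f i) (f (i + 1))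

private lemma disjUnion_val_aux {α : Type*} (s t : Finset α) (h : Disjoint s t) :
    (s.disjUnion t h).val = s.val + t.val := rfl

/-- The extremal example: `I` independent of size `k`, `K` complete of size `n-k`,
and a set `X ⊆ K` of size `k` joined completely to `I` in both directions.  This digraph is
strongly connected, non-Hamiltonian, and its in- and outdegree sequences both consist of `k`
copies of `k`, then `n-2k` copies of `n-1-k`, then `k` copies of `n-1`. -/
theorem stmt4 {V : Type*} [Fintype V] [DecidableEq V] (G : Digraph V) [DecidableRel G.Adj]
    (n k : ℕ) (hn : Fintype.card V = n) (hk : 1 ≤ k) (hk2 : 2 * k < n)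
    (I K X : Finset V) (hIK : Disjoint I K) (hcover : I ∪ K = Finset.univ)
    (hXK : X ⊆ K) (hI : I.card = k) (hK : K.card = n - k) (hXcard : X.card = k)
    (hAdj : ∀ a b : V, G.Adj a b ↔
      a ≠ b ∧ ((a ∈ K ∧ b ∈ K) ∨ (a ∈ I ∧ b ∈ X) ∨ (a ∈ X ∧ b ∈ I))) :
    (∀ x y : V, Relation.ReflTransGen G.Adj x y) ∧
    ¬ G.IsHamiltonian ∧
    Multiset.map G.outDeg (Finset.univ : Finset V).val =
      Multiset.replicate k k + Multiset.replicate (n - 2 * k) (n - 1 - k) +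
        Multiset.replicate k (n - 1) ∧
    Multiset.map G.inDeg (Finset.univ : Finset V).val =
      Multiset.replicate k k + Multiset.replicate (n - 2 * k) (n - 1 - k) +
        Multiset.replicate k (n - 1) := by
  subst hn
  -- basic facts
  have hsymm : ∀ a b : V, G.Adj a b ↔ G.Adj b a := by
    intro a b
    rw [hAdj, hAdj]
    constructor <;> rintro ⟨h1, h2⟩ <;> exact ⟨h1.symm, by tauto⟩
  have hIK' : ∀ v ∈ I, v ∉ K := fun v hv => Finset.disjoint_left.mp hIK hv
  have hXne : X.Nonempty := Finset.card_pos.mp (by omega)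
  -- outdegree computations
  have hdI : ∀ v ∈ I, G.outDeg v = k := by
    intro v hv
    have hvK : v ∉ K := hIK' v hv
    have hfil : Finset.univ.filter (fun u => G.Adj v u) = X := by
      ext u
      simp only [Finset.mem_filter, Finset.mem_univ, true_and, hAdj]
      constructor
      · rintro ⟨hne, (⟨h1, _⟩ | ⟨_, h2⟩ | ⟨h1, _⟩)⟩
        · exact absurd h1 hvK
        · exact h2
        · exact absurd (hXK h1) hvK
      · intro hu
        exact ⟨fun h => hvK (h ▸ hXK hu), Or.inr (Or.inl ⟨hv, hu⟩)⟩
    rw [Digraph.outDeg, hfil, hXcard]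
  have hdKX : ∀ v ∈ K, v ∉ X → G.outDeg v = Fintype.card V - 1 - k := by
    intro v hv hvX
    have hvI : v ∉ I := fun h => (hIK' v h) hv
    have hfil : Finset.univ.filter (fun u => G.Adj v u) = K.erase v := by
      ext u
      simp only [Finset.mem_filter, Finset.mem_univ, true_and, hAdj, Finset.mem_erase]
      constructor
      · rintro ⟨hne, (⟨_, h2⟩ | ⟨h1, _⟩ | ⟨h1, _⟩)⟩
        · exact ⟨hne.symm, h2⟩
        · exact absurd h1 hvI
        · exact absurd h1 hvX
      · rintro ⟨hne, hu⟩
        exact ⟨hne.symm, Or.inl ⟨hv, hu⟩⟩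
    rw [Digraph.outDeg, hfil, Finset.card_erase_of_mem hv, hK]
    omega
  have hdX : ∀ v ∈ X, G.outDeg v = Fintype.card V - 1 := by
    intro v hv
    have hfil : Finset.univ.filter (fun u => G.Adj v u) = Finset.univ.erase v := by
      ext u
      simp only [Finset.mem_filter, Finset.mem_univ, true_and, hAdj, Finset.mem_erase,
        and_true]
      constructor
      · rintro ⟨hne, _⟩; exact hne.symm
      · intro hne
        have hu : u ∈ I ∪ K := hcover ▸ Finset.mem_univ u
        rcases Finset.mem_union.mp hu with h | h
        · exact ⟨hne.symm, Or.inr (Or.inr ⟨hv, h⟩)⟩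
        · exact ⟨hne.symm, Or.inl ⟨hXK hv, h⟩⟩
    rw [Digraph.outDeg, hfil, Finset.card_erase_of_mem (Finset.mem_univ v),
      Finset.card_univ]
  -- decomposition of univ
  have hKXd : Disjoint (K \ X) X := Finset.sdiff_disjoint
  have hIKX : Disjoint I ((K \ X).disjUnion X hKXd) := by
    rw [Finset.disjUnion_eq_union, Finset.sdiff_union_of_subset hXK]; exact hIK
  have huniv : (Finset.univ : Finset V) = I.disjUnion ((K \ X).disjUnion X hKXd) hIKX := by
    rw [Finset.disjUnion_eq_union, Finset.disjUnion_eq_union,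
      Finset.sdiff_union_of_subset hXK, hcover]
  have hKXcard : (K \ X).card = Fintype.card V - 2 * k := by
    rw [Finset.card_sdiff_of_subset hXK, hK, hXcard]; omega
  have hmap : ∀ d : V → ℕ, (∀ v ∈ I, d v = k) → (∀ v ∈ K, v ∉ X → d v = Fintype.card V - 1 - k) →
      (∀ v ∈ X, d v = Fintype.card V - 1) →
      Multiset.map d (Finset.univ : Finset V).val =
        Multiset.replicate k k + Multiset.replicate (Fintype.card V - 2 * k) (Fintype.card V - 1 - k) +
          Multiset.replicate k (Fintype.card V - 1) := by
    intro d h1 h2 h3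
    rw [huniv, disjUnion_val_aux, disjUnion_val_aux, Multiset.map_add, Multiset.map_add,
      add_assoc]
    congr 1
    · rw [Multiset.eq_replicate]
      refine ⟨by rw [Multiset.card_map]; exact_mod_cast hI, ?_⟩
      intro b hb
      obtain ⟨v, hv, rfl⟩ := Multiset.mem_map.mp hb
      exact h1 v hv
    congr 1
    · rw [Multiset.eq_replicate]
      refine ⟨by rw [Multiset.card_map]; exact_mod_cast hKXcard, ?_⟩
      intro b hb
      obtain ⟨v, hv, rfl⟩ := Multiset.mem_map.mp hb
      have hv' := Finset.mem_sdiff.mp hv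
      exact h2 v hv'.1 hv'.2
    · rw [Multiset.eq_replicate]
      refine ⟨by rw [Multiset.card_map]; exact_mod_cast hXcard, ?_⟩
      intro b hb
      obtain ⟨v, hv, rfl⟩ := Multiset.mem_map.mp hb
      exact h3 v hv
  have hin_eq : ∀ v, G.inDeg v = G.outDeg v := by
    intro v
    unfold Digraph.inDeg Digraph.outDeg
    congr 1
    ext u
    simp [hsymm u v]
  refine ⟨?_, ?_, hmap G.outDeg hdI hdKX hdX, ?_⟩
  · -- strong connectivity
    obtain ⟨a, ha⟩ := hXne
    have step1 : ∀ x : V, Relation.ReflTransGen G.Adj x a := by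
      intro x
      rcases eq_or_ne x a with rfl | hne
      · exact Relation.ReflTransGen.refl
      · refine Relation.ReflTransGen.single ((hAdj x a).mpr ⟨hne, ?_⟩)
        have hx : x ∈ I ∪ K := hcover ▸ Finset.mem_univ x
        rcases Finset.mem_union.mp hx with h | h
        · exact Or.inr (Or.inl ⟨h, ha⟩)
        · exact Or.inl ⟨h, hXK ha⟩
    have step2 : ∀ y : V, Relation.ReflTransGen G.Adj a y := by
      intro y
      rcases eq_or_ne a y with rfl | hne
      · exact Relation.ReflTransGen.refl
      · refine Relation.ReflTransGen.single ((hAdj a y).mpr ⟨hne, ?_⟩)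
        have hy : y ∈ I ∪ K := hcover ▸ Finset.mem_univ y
        rcases Finset.mem_union.mp hy with h | h
        · exact Or.inr (Or.inr ⟨ha, h⟩)
        · exact Or.inl ⟨hXK ha, h⟩
    exact fun x y => (step1 x).trans (step2 y)
  · -- non-Hamiltonian
    rintro ⟨f, hfbij, hfadj⟩
    haveI : NeZero (Fintype.card V) := ⟨by omega⟩
    set S : Finset (ZMod (Fintype.card V)) := Finset.univ.filter (fun i => f i ∈ I) with hS
    set T : Finset (ZMod (Fintype.card V)) := Finset.univ.filter (fun i => f i ∈ X) with hT
    have himgS : S.image f = I := by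
      apply Finset.eq_of_subset_of_card_le
      · intro v hv
        obtain ⟨i, hi, rfl⟩ := Finset.mem_image.mp hv
        exact (Finset.mem_filter.mp hi).2
      · apply Finset.card_le_card
        intro v hv
        obtain ⟨i, rfl⟩ := hfbij.2 v
        exact Finset.mem_image_of_mem f (Finset.mem_filter.mpr ⟨Finset.mem_univ i, hv⟩)
    have hcardS : S.card = k := by
      rw [← hI, ← himgS, Finset.card_image_of_injective _ hfbij.1]
    have himgT : T.image f = X := by
      apply Finset.eq_of_subset_of_card_le
      · intro v hv
        obtain ⟨i, hi, rfl⟩ := Finset.mem_image.mp hv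
        exact (Finset.mem_filter.mp hi).2
      · apply Finset.card_le_card
        intro v hv
        obtain ⟨i, rfl⟩ := hfbij.2 v
        exact Finset.mem_image_of_mem f (Finset.mem_filter.mpr ⟨Finset.mem_univ i, hv⟩)
    have hcardT : T.card = k := by
      rw [← hXcard, ← himgT, Finset.card_image_of_injective _ hfbij.1]
    -- successor of an I-position is an X-position
    have hsucc : ∀ i ∈ S, i + 1 ∈ T := by
      intro i hi
      have hfi : f i ∈ I := (Finset.mem_filter.mp hi).2
      have hfiK : f i ∉ K := hIK' _ hfi
      have := (hAdj _ _).mp (hfadj i)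
      rcases this.2 with ⟨h1, _⟩ | ⟨_, h2⟩ | ⟨h1, _⟩
      · exact absurd h1 hfiK
      · exact Finset.mem_filter.mpr ⟨Finset.mem_univ _, h2⟩
      · exact absurd (hXK h1) hfiK
    have hpred : ∀ i ∈ S, i - 1 ∈ T := by
      intro i hi
      have hfi : f i ∈ I := (Finset.mem_filter.mp hi).2
      have hfiK : f i ∉ K := hIK' _ hfi
      have h := (hAdj _ _).mp (hfadj (i - 1))
      rw [sub_add_cancel] at h
      rcases h.2 with ⟨_, h2⟩ | ⟨_, h2⟩ | ⟨h1, _⟩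
      · exact absurd h2 hfiK
      · exact absurd (hXK h2) hfiK
      · exact Finset.mem_filter.mpr ⟨Finset.mem_univ _, h1⟩
    have himg2 : S.image (· - 1) = T := by
      apply Finset.eq_of_subset_of_card_le
      · intro j hj
        obtain ⟨i, hi, rfl⟩ := Finset.mem_image.mp hj
        exact hpred i hi
      · rw [Finset.card_image_of_injective _ (sub_left_injective), hcardS, hcardT]
    -- S ∪ T is closed under successor
    have hclosed : ∀ a ∈ S ∪ T, a + 1 ∈ S ∪ T := by
      intro a ha
      rcases Finset.mem_union.mp ha with h | h
      · exact Finset.mem_union_right _ (hsucc a h)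
      · rw [← himg2] at h
        obtain ⟨i, hi, rfl⟩ := Finset.mem_image.mp h
        rw [sub_add_cancel]
        exact Finset.mem_union_left _ hi
    have hSne : S.Nonempty := Finset.card_pos.mp (by omega)
    obtain ⟨i0, hi0⟩ := hSne
    have hmem : ∀ m : ℕ, i0 + (m : ZMod (Fintype.card V)) ∈ S ∪ T := by
      intro m
      induction m with
      | zero => simpa using Finset.mem_union_left _ hi0
      | succ m ih =>
        have : i0 + ((m + 1 : ℕ) : ZMod (Fintype.card V)) = (i0 + (m : ZMod (Fintype.card V))) + 1 := by
          push_cast; ring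
        rw [this]
        exact hclosed _ ih
    have hall : ∀ j : ZMod (Fintype.card V), j ∈ S ∪ T := by
      intro j
      have := hmem (j - i0).val
      rwa [ZMod.natCast_val, ZMod.cast_id, add_sub_cancel] at this
    have hcard : Fintype.card V ≤ (S ∪ T).card := by
      have : (Finset.univ : Finset (ZMod (Fintype.card V))) ⊆ S ∪ T := fun j _ => hall j
      calc Fintype.card V = Fintype.card (ZMod (Fintype.card V)) := (ZMod.card _).symm
        _ = (Finset.univ : Finset (ZMod (Fintype.card V))).card := Finset.card_univ.symm
        _ ≤ (S ∪ T).card := Finset.card_le_card this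
    have := Finset.card_union_le S T
    omega
  · -- indegree sequence
    refine hmap G.inDeg ?_ ?_ ?_
    · intro v hv; rw [hin_eq]; exact hdI v hv
    · intro v hv hv'; rw [hin_eq]; exact hdKX v hv hv'
    · intro v hv; rw [hin_eq]; exact hdX v hv
end

section
/- Suppose ε > 0 and G = (A,B) is a bipartite graph with |A| = |B| = n that is ε-regular with density at least 2ε. Then G contains a matching of size at least (1 - ε)n. -/
open Finset

/-- The density of the bipartite graph `G` between `X` and `Y`. -/
noncomputable def bidensity {α β : Type*} (G : α → β → Prop) [∀ a b, Decidable (G a b)]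
    (X : Finset α) (Y : Finset β) : ℝ :=
  (((X ×ˢ Y).filter fun p => G p.1 p.2).card : ℝ) / ((X.card : ℝ) * (Y.card : ℝ))

/-- An `ε`-regular bipartite graph of density at least `2ε` with both classes of
size `n` contains a matching of size at least `(1-ε)n`. -/
theorem stmt7 {α β : Type*} [Fintype α] [Fintype β] [DecidableEq α] [DecidableEq β]
    (G : α → β → Prop) [∀ a b, Decidable (G a b)] (n : ℕ)
    (hA : Fintype.card α = n) (hB : Fintype.card β = n) (ε : ℝ) (hε : 0 < ε)
    (hreg : ∀ (X : Finset α) (Y : Finset β),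
      ε * n ≤ (X.card : ℝ) → ε * n ≤ (Y.card : ℝ) →
      |bidensity G X Y - bidensity G Finset.univ Finset.univ| < ε)
    (hdens : 2 * ε ≤ bidensity G Finset.univ Finset.univ) :
    ∃ (s : Finset α) (f : α → β), (1 - ε) * n ≤ (s.card : ℝ) ∧
      Set.InjOn f s ∧ ∀ a ∈ s, G a (f a) := by
  classical
  rcases Nat.eq_zero_or_pos n with hn | hn
  · subst hn
    have hα : IsEmpty α := Fintype.card_eq_zero_iff.mp hA
    exact ⟨∅, fun a => hα.elim a, by simp, by simp, by simp⟩
  obtain ⟨b0⟩ : Nonempty β := Fintype.card_pos_iff.mp (hB ▸ hn)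
  set d : ℕ := ⌊ε * n⌋₊ with hd
  have hεn_nonneg : (0:ℝ) ≤ ε * n := by positivity
  have hdle : (d:ℝ) ≤ ε * n := Nat.floor_le hεn_nonneg
  have hlt : ε * n < d + 1 := Nat.lt_floor_add_one _
  set Na : α → Finset β := fun a => univ.filter (fun b => G a b) with hNa
  set t : α → Finset (β ⊕ Fin d) :=
    fun a => (Na a).image Sum.inl ∪ (univ : Finset (Fin d)).image Sum.inr with ht
  have hdnn : 0 ≤ bidensity G (univ : Finset α) (univ : Finset β) := by
    unfold bidensity; positivity
  have hall : ∀ (s : Finset α), s.card ≤ (s.biUnion t).card := by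
    intro s
    rcases s.eq_empty_or_nonempty with rfl | hs
    · simp
    have hsplit : s.biUnion t
        = (s.biUnion Na).image Sum.inl ∪ (univ : Finset (Fin d)).image Sum.inr := by
      ext x
      simp only [ht, mem_biUnion, mem_union, mem_image]
      constructor
      · rintro ⟨a, ha, h | h⟩
        · exact Or.inl (by obtain ⟨b, hb, rfl⟩ := h; exact ⟨b, ⟨a, ha, hb⟩, rfl⟩)
        · exact Or.inr h
      · rintro (⟨b, hb, rfl⟩ | h)
        · obtain ⟨a, ha, hab⟩ := hb
          exact ⟨a, ha, Or.inl ⟨b, hab, rfl⟩⟩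
        · obtain ⟨a, ha⟩ := hs
          exact ⟨a, ha, Or.inr h⟩
    rw [hsplit, card_union_of_disjoint, card_image_of_injective _ Sum.inl_injective,
      card_image_of_injective _ Sum.inr_injective, card_univ, Fintype.card_fin]
    · by_contra hcon
      push_neg at hcon
      set N := s.biUnion Na with hN
      set Y : Finset β := univ \ N with hY
      have hsn : s.card ≤ n := hA ▸ card_le_univ s
      have hNn : N.card ≤ n := hB ▸ card_le_univ N
      have hYcard : Y.card = n - N.card := by rw [hY, card_sdiff_of_subset (subset_univ _), card_univ, hB]
      have hs1 : d + 1 ≤ s.card := by omega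
      have hsX : ε * n ≤ (s.card : ℝ) := le_trans hlt.le (by exact_mod_cast hs1)
      have hY1 : d + 1 ≤ Y.card := by omega
      have hsY : ε * n ≤ (Y.card : ℝ) := le_trans hlt.le (by exact_mod_cast hY1)
      have hzero : bidensity G s Y = 0 := by
        have hemp : ((s ×ˢ Y).filter fun p => G p.1 p.2) = ∅ := by
          ext p
          simp only [mem_filter, mem_product, notMem_empty, iff_false, not_and]
          rintro ⟨hp1, hp2⟩ hg
          have hmem : p.2 ∈ N := mem_biUnion.mpr ⟨p.1, hp1, by simp [hNa, hg]⟩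
          rw [hY, mem_sdiff] at hp2
          exact hp2.2 hmem
        simp [bidensity, hemp]
      have habs := hreg s Y hsX hsY
      rw [hzero, zero_sub, abs_neg, abs_of_nonneg hdnn] at habs
      linarith
    · simp only [disjoint_left, mem_image]
      rintro x ⟨b, _, rfl⟩ ⟨c, _, h⟩
      exact Sum.inl_ne_inr h.symm
  obtain ⟨f, hfinj, hft⟩ := (Finset.all_card_le_biUnion_card_iff_exists_injective t).mp hall
  set S : Finset α := univ.filter (fun a => (f a).isLeft) with hS
  set T : Finset α := univ.filter (fun a => (f a).isRight) with hT
  have hTle : T.card ≤ d := by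
    have hsub : T.image f ⊆ (univ : Finset (Fin d)).image Sum.inr := by
      intro x hx
      simp only [hT, mem_image, mem_filter, mem_univ, true_and] at hx ⊢
      obtain ⟨a, ha, rfl⟩ := hx
      obtain ⟨c, hc⟩ := Sum.isRight_iff.mp ha
      exact ⟨c, hc.symm⟩
    calc T.card = (T.image f).card := (card_image_of_injective _ hfinj).symm
      _ ≤ ((univ : Finset (Fin d)).image Sum.inr).card := card_le_card hsub
      _ ≤ d := by
          rw [card_image_of_injective _ Sum.inr_injective, card_univ, Fintype.card_fin]
  have hfe : (univ.filter fun a => ¬ (f a).isLeft = true) = T := by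
    rw [hT]; apply filter_congr; intro a _; simp [Sum.not_isLeft]
  have hsum : S.card + T.card = n := by
    rw [← hfe, hS, Finset.card_filter_add_card_filter_not, card_univ, hA]
  set f' : α → β := fun a => Sum.elim id (fun _ => b0) (f a) with hf'
  have hinl : ∀ a ∈ S, f a = Sum.inl (f' a) := by
    intro a ha
    rw [hS, mem_filter] at ha
    obtain ⟨b, hb⟩ := Sum.isLeft_iff.mp ha.2
    simp [hf', hb]
  refine ⟨S, f', ?_, ?_, ?_⟩
  · have h1 : (S.card : ℝ) + T.card = n := by exact_mod_cast hsum
    have h2 : (T.card : ℝ) ≤ d := by exact_mod_cast hTle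
    nlinarith
  · intro a ha a' ha' h
    apply hfinj
    rw [hinl a ha, hinl a' ha', h]
  · intro a ha
    have hmem := hft a
    rw [hinl a ha, ht] at hmem
    simp only [mem_union, mem_image] at hmem
    rcases hmem with ⟨b, hb, hb2⟩ | ⟨c, _, hc⟩
    · obtain rfl := Sum.inl_injective hb2
      simpa [hNa] using hb
    · exact absurd hc (Sum.inr_ne_inl)
end

section
/- Suppose ε > 0 and G = (A,B) is a bipartite graph with |A| = |B| = n that is ε-regular with density at least 2ε, and in addition every vertex of A has degree at least 2εn and every vertex of B has degree at least 2εn (i.e. G is (ε,2ε)-super-regular). Then G has a perfect matching. -/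
open Finset

/-- An `(ε,2ε)`-super-regular bipartite graph (ε-regular of density at least 2ε,
with all degrees at least `2εn`) with both classes of size `n` has a perfect matching. -/
theorem stmt8 {α β : Type*} [Fintype α] [Fintype β] [DecidableEq α] [DecidableEq β]
    (G : α → β → Prop) [∀ a b, Decidable (G a b)] (n : ℕ)
    (hA : Fintype.card α = n) (hB : Fintype.card β = n) (ε : ℝ) (hε : 0 < ε)
    (hreg : ∀ (X : Finset α) (Y : Finset β),
      ε * n ≤ (X.card : ℝ) → ε * n ≤ (Y.card : ℝ) →
      |bidensity G X Y - bidensity G Finset.univ Finset.univ| < ε)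
    (hdens : 2 * ε ≤ bidensity G Finset.univ Finset.univ)
    (hdegA : ∀ a : α, 2 * ε * n ≤ ((Finset.univ.filter (G a)).card : ℝ))
    (hdegB : ∀ b : β, 2 * ε * n ≤ ((Finset.univ.filter fun a => G a b).card : ℝ)) :
    ∃ σ : α ≃ β, ∀ a : α, G a (σ a) := by
  set d : ℝ := bidensity G Finset.univ Finset.univ with hd
  have hd0 : 0 ≤ d := by
    apply div_nonneg (by positivity) (by positivity)
  -- Hall's condition
  have hall : ∀ S : Finset α, S.card ≤ (S.biUnion fun a => Finset.univ.filter (G a)).card := by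
    intro S
    by_contra hcon
    push_neg at hcon
    set N := S.biUnion fun a => Finset.univ.filter (G a) with hN
    have hSpos : 0 < S.card := lt_of_le_of_lt (Nat.zero_le _) hcon
    have hSn : S.card ≤ n := hA ▸ Finset.card_le_univ S
    have hεn0 : 0 ≤ ε * n := by positivity
    rcases lt_or_ge (S.card : ℝ) (ε * n) with hsmall | hbig
    · -- small case: one vertex's neighbourhood already too big
      obtain ⟨a, ha⟩ := Finset.card_pos.mp hSpos
      have hsub : Finset.univ.filter (G a) ⊆ N := fun b hb =>
        Finset.mem_biUnion.mpr ⟨a, ha, hb⟩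
      have h1 : (S.card : ℝ) ≤ (N.card : ℝ) := by
        have := hdegA a
        have h2 : (Finset.univ.filter (G a)).card ≤ N.card := Finset.card_le_card hsub
        have : 2 * ε * n ≤ (N.card : ℝ) := this.trans (by exact_mod_cast h2)
        nlinarith
      exact absurd (by exact_mod_cast h1) (not_le.mpr hcon)
    · rcases lt_or_ge ((n : ℝ) - S.card) (ε * n) with hclose | hfar
      · -- S is almost everything: every b has a neighbour in S
        have hNuniv : N = Finset.univ := by
          apply Finset.eq_univ_of_forall
          intro b
          by_contra hb
          -- all neighbours of b lie outside S
          have hsub : (Finset.univ.filter fun a => G a b) ⊆ Finset.univ \ S := by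
            intro a ha
            rw [Finset.mem_filter] at ha
            rw [Finset.mem_sdiff]
            refine ⟨Finset.mem_univ _, fun haS => hb ?_⟩
            exact Finset.mem_biUnion.mpr ⟨a, haS, Finset.mem_filter.mpr ⟨Finset.mem_univ _, ha.2⟩⟩
          have h1 := Finset.card_le_card hsub
          have h2 : (Finset.univ \ S).card = n - S.card := by
            rw [Finset.card_sdiff_of_subset (Finset.subset_univ S), Finset.card_univ, hA]
          have h3 : ((n - S.card : ℕ) : ℝ) = (n : ℝ) - S.card := by
            push_cast [Nat.cast_sub hSn]; ring
          have := hdegB b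
          rw [h2] at h1
          have h1' : ((Finset.univ.filter fun a => G a b).card : ℝ) ≤ (n : ℝ) - S.card := by
            rw [← h3]; exact_mod_cast h1
          nlinarith
        have : N.card = n := by rw [hNuniv, Finset.card_univ, hB]
        omega
      · -- regular pair case: Y = complement of N is large, zero density, contradiction
        set Y := (Finset.univ : Finset β) \ N with hY
        have hNn : N.card ≤ n := hB ▸ Finset.card_le_univ N
        have hYcard : Y.card = n - N.card := by
          rw [hY, Finset.card_sdiff_of_subset (Finset.subset_univ N), Finset.card_univ, hB]
        have hYbig : ε * n ≤ (Y.card : ℝ) := by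
          have h3 : ((n - N.card : ℕ) : ℝ) = (n : ℝ) - N.card := by
            push_cast [Nat.cast_sub hNn]; ring
          rw [hYcard, h3]
          have : (N.card : ℝ) < S.card := by exact_mod_cast hcon
          linarith
        have hzero : bidensity G S Y = 0 := by
          have : ((S ×ˢ Y).filter fun p => G p.1 p.2) = ∅ := by
            rw [Finset.eq_empty_iff_forall_notMem]
            rintro ⟨a, b⟩ hp
            rw [Finset.mem_filter, Finset.mem_product] at hp
            obtain ⟨⟨haS, hbY⟩, hG⟩ := hp
            rw [hY, Finset.mem_sdiff] at hbY
            exact hbY.2 (Finset.mem_biUnion.mpr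
              ⟨a, haS, Finset.mem_filter.mpr ⟨Finset.mem_univ _, hG⟩⟩)
          rw [bidensity, this]
          simp
        have := hreg S Y hbig hYbig
        rw [hzero, zero_sub, abs_neg, abs_of_nonneg hd0] at this
        linarith
  obtain ⟨f, hfinj, hf⟩ :=
    (Finset.all_card_le_biUnion_card_iff_exists_injective
      (fun a : α => Finset.univ.filter (G a))).mp hall
  have hbij : Function.Bijective f :=
    (Fintype.bijective_iff_injective_and_card f).mpr ⟨hfinj, by rw [hA, hB]⟩
  refine ⟨Equiv.ofBijective f hbij, fun a => ?_⟩
  have := hf a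
  rw [Finset.mem_filter] at this
  exact this.2
end

section
/- Let R be a digraph on k vertices and let d, β be reals with 0 < d, 0 < β ≤ 1, and 2dk + 2 ≤ βk/2. Suppose: (a) every vertex of R has outdegree and indegree at least βk/2; (b) for every integer i with 1 ≤ i ≤ k, either d_i^+(R) ≥ min(i + βk/2, (1/2 - 2d)k) or d^-_{(1-β/2)k - i}(R) ≥ k - i - 2dk; (c) the statement obtained from (b) by swapping + and - also holds (statements about d_j^± with j outside [1,k] being interpreted as true, and fractional indices rounded up). Then for every set S of vertices of R with |S| ≤ (1/2 - 2d)k or |S| > (1/2 + 2d)k, we have |N^+(S)| ≥ |S| and |N^-(S)| ≥ |S|. -/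
open Finset

/-- `degSeq f i` is the `i`-th smallest value of `f` over all vertices (1-indexed). -/
noncomputable def degSeq {V : Type*} [Fintype V] (f : V → ℕ) (i : ℕ) : ℕ :=
  ((Multiset.map f (Finset.univ : Finset V).val).sort (· ≤ ·)).getD (i - 1) 0

lemma degSeq_count {V : Type*} [Fintype V] (f : V → ℕ) {k i m : ℕ}
    (hk : Fintype.card V = k) (hi1 : 1 ≤ i) (hik : i ≤ k)
    (h : m ≤ degSeq f i) :
    k - i + 1 ≤ (univ.filter fun v => m ≤ f v).card := by
  classical
  set l := ((Multiset.map f (Finset.univ : Finset V).val).sort (· ≤ ·)) with hl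
  have hlen : l.length = k := by
    rw [hl, Multiset.length_sort, Multiset.card_map]; exact hk
  have hsorted : l.Pairwise (· ≤ ·) := Multiset.pairwise_sort _ _
  have hcard : (univ.filter fun v => m ≤ f v).card
      = l.countP (fun x => decide (m ≤ x)) := by
    have h1 : ((l : Multiset ℕ)) = Multiset.map f (Finset.univ : Finset V).val :=
      Multiset.sort_eq _ _
    have h2 : Multiset.countP (fun x => m ≤ x) (l : Multiset ℕ)
        = Multiset.countP (fun x => m ≤ x) (Multiset.map f (Finset.univ : Finset V).val) := by
      rw [h1]
    rw [Multiset.coe_countP, Multiset.countP_map] at h2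
    rw [show #(filter (fun v => m ≤ f v) univ)
        = Multiset.card (Multiset.filter (fun a => m ≤ f a) univ.val) from rfl, ← h2]
  have hi1' : i - 1 < l.length := by omega
  have hget : m ≤ l[i-1] := by
    have : degSeq f i = l[i-1] := List.getD_eq_getElem l 0 hi1'
    omega
  have hdropAll : ∀ x ∈ l.drop (i-1), decide (m ≤ x) = true := by
    intro x hx
    rw [List.mem_iff_getElem] at hx
    obtain ⟨j, hj, rfl⟩ := hx
    rw [List.getElem_drop]
    simp only [decide_eq_true_eq]
    refine hget.trans ?_
    have := hsorted.rel_get_of_le (a := ⟨i-1, hi1'⟩)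
      (b := ⟨i-1+j, by rw [List.length_drop] at hj; omega⟩)
      (by simp)
    simpa using this
  have hdlen : (l.drop (i-1)).length = k - i + 1 := by
    rw [List.length_drop, hlen]; omega
  have hdcount : (l.drop (i-1)).countP (fun x => decide (m ≤ x)) = k - i + 1 := by
    rw [List.countP_eq_length.mpr hdropAll, hdlen]
  have hsplit : l.countP (fun x => decide (m ≤ x))
      = (l.take (i-1)).countP (fun x => decide (m ≤ x))
        + (l.drop (i-1)).countP (fun x => decide (m ≤ x)) := by
    conv_lhs => rw [← List.take_append_drop (i-1) l]
    rw [List.countP_append]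
  omega

lemma exists_mem_of_card {V : Type*} [Fintype V] [DecidableEq V] (S : Finset V)
    (p : V → Prop) [DecidablePred p] {k : ℕ} (hk : Fintype.card V = k)
    (h : k < (univ.filter p).card + S.card) : ∃ v ∈ S, p v := by
  have h2 := Finset.card_union_add_card_inter (univ.filter p) S
  have h3 : (univ.filter p ∪ S).card ≤ k := hk ▸ Finset.card_le_univ _
  have h4 : 0 < (univ.filter p ∩ S).card := by omega
  obtain ⟨v, hv⟩ := Finset.card_pos.mp h4
  rw [Finset.mem_inter, Finset.mem_filter] at hv
  exact ⟨v, hv.2, hv.1.2⟩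

lemma lemB {V : Type*} [Fintype V] [DecidableEq V] (A : V → V → Prop) [DecidableRel A]
    (S : Finset V) {v : V} (hv : v ∈ S)
    (h : S.card ≤ (univ.filter fun u => A v u).card) :
    S.card ≤ (S.biUnion fun v => univ.filter fun u => A v u).card :=
  h.trans (card_le_card (subset_biUnion_of_mem (fun v => univ.filter fun u => A v u) hv))

lemma lemA {V : Type*} [Fintype V] [DecidableEq V] (A : V → V → Prop) [DecidableRel A]
    {k : ℕ} (hk : Fintype.card V = k) (S : Finset V)
    (h : S.card ≤ (univ.filter fun x =>
        k - S.card + 1 ≤ (univ.filter fun u => A u x).card).card) :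
    S.card ≤ (S.biUnion fun v => univ.filter fun u => A v u).card := by
  refine h.trans (card_le_card ?_)
  intro x hx
  rw [mem_filter] at hx
  rw [mem_biUnion]
  by_contra hcon
  push_neg at hcon
  simp only [mem_filter, mem_univ, true_and] at hcon
  have hsub : (univ.filter fun u => A u x) ⊆ Sᶜ := by
    intro u hu
    rw [mem_filter] at hu
    rw [mem_compl]
    exact fun huS => hcon u huS hu.2
  have h5 : (univ.filter fun u => A u x).card ≤ k - S.card := by
    have := Finset.card_le_card hsub
    rwa [Finset.card_compl, hk] at this
  have hsk : S.card ≤ k := hk ▸ Finset.card_le_univ S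
  omega

lemma ceil_nat (x : ℝ) (hx : 0 < x) :
    ∃ n : ℕ, 1 ≤ n ∧ x ≤ (n:ℝ) ∧ (n:ℝ) < x + 1 ∧ ((n:ℕ):ℤ) = ⌈x⌉ := by
  refine ⟨⌈x⌉.toNat, ?_, ?_, ?_, ?_⟩
  · have := Int.ceil_pos.mpr hx; omega
  · have h : ((⌈x⌉.toNat : ℕ):ℤ) = ⌈x⌉ := Int.toNat_of_nonneg (Int.ceil_nonneg hx.le)
    have h2 : ((⌈x⌉.toNat : ℕ):ℝ) = ((⌈x⌉:ℤ):ℝ) := by exact_mod_cast h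
    rw [h2]; exact Int.le_ceil x
  · have h : ((⌈x⌉.toNat : ℕ):ℤ) = ⌈x⌉ := Int.toNat_of_nonneg (Int.ceil_nonneg hx.le)
    have h2 : ((⌈x⌉.toNat : ℕ):ℝ) = ((⌈x⌉:ℤ):ℝ) := by exact_mod_cast h
    rw [h2]; exact Int.ceil_lt_add_one x
  · exact Int.toNat_of_nonneg (Int.ceil_nonneg hx.le)

lemma auxExpand {V : Type*} [Fintype V] [DecidableEq V] (A : V → V → Prop) [DecidableRel A]
    (k : ℕ) (hk : Fintype.card V = k) (d β : ℝ)
    (hd : 0 < d) (hβ : 0 < β) (hβ1 : β ≤ 1)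
    (hsmall : 2 * d * k + 2 ≤ β * k / 2)
    (hminout : ∀ v : V, β * k / 2 ≤ (((univ.filter fun u => A v u).card : ℕ) : ℝ))
    (hminin : ∀ v : V, β * k / 2 ≤ (((univ.filter fun u => A u v).card : ℕ) : ℝ))
    (hb : ∀ i : ℕ, 1 ≤ i → i ≤ k →
      (min ((i : ℝ) + β * k / 2) ((1 / 2 - 2 * d) * k)
          ≤ (degSeq (fun v => (univ.filter fun u => A v u).card) i : ℝ)) ∨
        (1 ≤ ⌈(1 - β / 2) * (k : ℝ) - i⌉ → ⌈(1 - β / 2) * (k : ℝ) - i⌉ ≤ (k : ℤ) →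
          (k : ℝ) - i - 2 * d * k ≤ (degSeq (fun v => (univ.filter fun u => A u v).card)
            (⌈(1 - β / 2) * (k : ℝ) - i⌉.toNat) : ℝ)))
    (hc : ∀ i : ℕ, 1 ≤ i → i ≤ k →
      (min ((i : ℝ) + β * k / 2) ((1 / 2 - 2 * d) * k)
          ≤ (degSeq (fun v => (univ.filter fun u => A u v).card) i : ℝ)) ∨
        (1 ≤ ⌈(1 - β / 2) * (k : ℝ) - i⌉ → ⌈(1 - β / 2) * (k : ℝ) - i⌉ ≤ (k : ℤ) →
          (k : ℝ) - i - 2 * d * k ≤ (degSeq (fun v => (univ.filter fun u => A v u).card)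
            (⌈(1 - β / 2) * (k : ℝ) - i⌉.toNat) : ℝ))) :
    ∀ S : Finset V, ((S.card : ℝ) ≤ (1 / 2 - 2 * d) * k ∨ (1 / 2 + 2 * d) * k < (S.card : ℝ)) →
      S.card ≤ (S.biUnion fun v => univ.filter fun u => A v u).card := by
  have hk0 : (0:ℝ) ≤ (k:ℝ) := Nat.cast_nonneg k
  have hdk0 : 0 ≤ d * k := by positivity
  have hbk0 : (0:ℝ) ≤ β * k := by positivity
  have hbk2 : β * k / 2 ≤ (k:ℝ) / 2 := by nlinarith
  have hk4 : (4:ℝ) ≤ (k:ℝ) := by nlinarith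
  intro S hS
  have hsk : S.card ≤ k := hk ▸ Finset.card_le_univ S
  have hskR : (S.card : ℝ) ≤ (k : ℝ) := Nat.cast_le.mpr hsk
  have hkscast : ((k - S.card : ℕ) : ℝ) = (k:ℝ) - (S.card:ℝ) := by
    rw [Nat.cast_sub hsk]
  rcases hS with hS | hS
  · -- small case
    by_cases hs0 : S.card = 0
    · simp [hs0]
    obtain ⟨v0, hv0⟩ := Finset.card_pos.mp (Nat.pos_of_ne_zero hs0)
    by_cases hsb : (S.card : ℝ) ≤ β * k / 2
    · exact lemB A S hv0 (Nat.cast_le.mp (hsb.trans (hminout v0)))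
    push_neg at hsb
    have hx1 : (0:ℝ) < (S.card : ℝ) - β * k / 2 := by linarith
    obtain ⟨i, hi1, hile, hilt, hiZ⟩ := ceil_nat _ hx1
    have his : i ≤ S.card := by
      have h1 : (i:ℝ) < (S.card:ℝ) + 1 := by linarith
      have : i < S.card + 1 := by exact_mod_cast h1
      omega
    have hik : i ≤ k := his.trans hsk
    rcases hb i hi1 hik with h1 | h2
    · have hds : (S.card:ℝ) ≤ (degSeq (fun v => (univ.filter fun u => A v u).card) i : ℝ) :=
        le_trans (le_min (by linarith) hS) h1
      have hds' : S.card ≤ degSeq (fun v => (univ.filter fun u => A v u).card) i := by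
        exact_mod_cast hds
      have hcount := degSeq_count (fun v => (univ.filter fun u => A v u).card) hk hi1 hik hds'
      beta_reduce at hcount
      obtain ⟨v, hvS, hv⟩ := exists_mem_of_card S
        (fun v => S.card ≤ (univ.filter fun u => A v u).card) hk (by omega)
      exact lemB A S hvS hv
    · have hx2pos : (0:ℝ) < (1 - β / 2) * (k : ℝ) - i := by linarith
      have hceil1 : 1 ≤ ⌈(1 - β / 2) * (k : ℝ) - (i:ℝ)⌉ := Int.ceil_pos.mpr hx2pos
      have hi1R : (1:ℝ) ≤ (i:ℝ) := by exact_mod_cast hi1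
      have hceilk : ⌈(1 - β / 2) * (k : ℝ) - (i:ℝ)⌉ ≤ (k:ℤ) := by
        rw [Int.ceil_le]
        push_cast
        linarith
      have h2' := h2 hceil1 hceilk
      obtain ⟨j, hj1, hjle, hjlt, hjZ⟩ := ceil_nat _ hx2pos
      have hjeq : ⌈(1 - β / 2) * (k : ℝ) - (i:ℝ)⌉.toNat = j := by omega
      rw [hjeq] at h2'
      have hjk : j ≤ k := by omega
      have hds : ((k - S.card + 1 : ℕ) : ℝ)
          ≤ (degSeq (fun v => (univ.filter fun u => A u v).card) j : ℝ) := by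
        push_cast [Nat.cast_sub hsk]
        refine le_trans ?_ h2'
        linarith
      have hds' : k - S.card + 1 ≤ degSeq (fun v => (univ.filter fun u => A u v).card) j := by
        exact_mod_cast hds
      have hcount := degSeq_count (fun v => (univ.filter fun u => A u v).card) hk hj1 hjk hds'
      beta_reduce at hcount
      have hjs : j ≤ k - S.card := by
        have h1 : (j:ℝ) < ((k - S.card:ℕ):ℝ) + 1 := by
          rw [hkscast]; linarith
        have : j < (k - S.card) + 1 := by exact_mod_cast h1
        omega
      exact lemA A hk S (le_trans (by omega) hcount)
  · -- large case
    have hs1 : 1 ≤ S.card := by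
      by_contra hcon
      have h0 : S.card = 0 := by omega
      rw [h0] at hS
      push_cast at hS
      linarith
    have hs1R : (1:ℝ) ≤ (S.card:ℝ) := by exact_mod_cast hs1
    by_cases hbig : (k:ℝ) - S.card - 2 * d * k ≤ 0
    · have hall : ∀ x : V, k - S.card + 1 ≤ (univ.filter fun u => A u x).card := by
        intro x
        have h1 := hminin x
        have h2 : ((k - S.card:ℕ):ℝ) + 2 ≤ ((univ.filter fun u => A u x).card : ℝ) := by
          rw [hkscast]; linarith
        have : (k - S.card) + 2 ≤ (univ.filter fun u => A u x).card := by exact_mod_cast h2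
        omega
      refine lemA A hk S ?_
      rw [Finset.filter_true_of_mem (fun x _ => hall x)]
      rw [Finset.card_univ, hk]
      exact hsk
    · push_neg at hbig
      obtain ⟨i, hi1, hile, hilt, hiZ⟩ := ceil_nat _ hbig
      have hi1R : (1:ℝ) ≤ (i:ℝ) := by exact_mod_cast hi1
      have hiks : i ≤ k - S.card := by
        have h1 : (i:ℝ) < ((k - S.card:ℕ):ℝ) + 1 := by
          rw [hkscast]; linarith
        have : i < (k - S.card) + 1 := by exact_mod_cast h1
        omega
      have hik : i ≤ k := hiks.trans (Nat.sub_le _ _)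
      have hiksR : (i:ℝ) ≤ (k:ℝ) - (S.card:ℝ) := by
        rw [← hkscast]; exact_mod_cast hiks
      rcases hc i hi1 hik with h1 | h2
      · have hlt : ((k - S.card:ℕ):ℝ)
            < (degSeq (fun v => (univ.filter fun u => A u v).card) i : ℝ) := by
          rw [hkscast]
          refine lt_of_lt_of_le ?_ h1
          rw [lt_min_iff]
          exact ⟨by linarith, by linarith⟩
        have hds' : k - S.card + 1 ≤ degSeq (fun v => (univ.filter fun u => A u v).card) i := by
          have : (k - S.card) < degSeq (fun v => (univ.filter fun u => A u v).card) i := by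
            exact_mod_cast hlt
          omega
        have hcount := degSeq_count (fun v => (univ.filter fun u => A u v).card) hk hi1 hik hds'
        beta_reduce at hcount
        exact lemA A hk S (le_trans (by omega) hcount)
      · have hx2pos : (0:ℝ) < (1 - β / 2) * (k : ℝ) - i := by linarith
        have hceil1 : 1 ≤ ⌈(1 - β / 2) * (k : ℝ) - (i:ℝ)⌉ := Int.ceil_pos.mpr hx2pos
        have hceilk : ⌈(1 - β / 2) * (k : ℝ) - (i:ℝ)⌉ ≤ (k:ℤ) := by
          rw [Int.ceil_le]
          push_cast
          linarith
        have h2' := h2 hceil1 hceilk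
        obtain ⟨j, hj1, hjle, hjlt, hjZ⟩ := ceil_nat _ hx2pos
        have hjeq : ⌈(1 - β / 2) * (k : ℝ) - (i:ℝ)⌉.toNat = j := by omega
        rw [hjeq] at h2'
        have hjk : j ≤ k := by omega
        have hds : (S.card:ℝ)
            < (degSeq (fun v => (univ.filter fun u => A v u).card) j : ℝ) + 1 := by
          linarith
        have hds' : S.card ≤ degSeq (fun v => (univ.filter fun u => A v u).card) j := by
          have : S.card < degSeq (fun v => (univ.filter fun u => A v u).card) j + 1 := by
            exact_mod_cast hds
          omega
        have hcount := degSeq_count (fun v => (univ.filter fun u => A v u).card) hk hj1 hjk hds'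
        beta_reduce at hcount
        have hjs : j ≤ S.card := by
          have h1 : (j:ℝ) < (S.card:ℝ) := by linarith
          have : j < S.card := by exact_mod_cast h1
          omega
        obtain ⟨v, hvS, hv⟩ := exists_mem_of_card S
          (fun v => S.card ≤ (univ.filter fun u => A v u).card) hk (by omega)
        exact lemB A S hvS hv

/-- Under the inherited degree-sequence conditions of the reduced digraph `R`,
every set `S` of vertices with `|S| ≤ (1/2 - 2d)k` or `|S| > (1/2 + 2d)k` satisfies
`|N⁺(S)| ≥ |S|` and `|N⁻(S)| ≥ |S|`. -/
theorem stmt9 {V : Type*} [Fintype V] [DecidableEq V] (R : Digraph V) [DecidableRel R.Adj]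
    (k : ℕ) (hk : Fintype.card V = k) (d β : ℝ)
    (hd : 0 < d) (hβ : 0 < β) (hβ1 : β ≤ 1)
    (hsmall : 2 * d * k + 2 ≤ β * k / 2)
    (hmin : ∀ v : V, β * k / 2 ≤ (R.outDeg v : ℝ) ∧ β * k / 2 ≤ (R.inDeg v : ℝ))
    (hb : ∀ i : ℕ, 1 ≤ i → i ≤ k →
      (min ((i : ℝ) + β * k / 2) ((1 / 2 - 2 * d) * k) ≤ (degSeq R.outDeg i : ℝ)) ∨
        (1 ≤ ⌈(1 - β / 2) * (k : ℝ) - i⌉ → ⌈(1 - β / 2) * (k : ℝ) - i⌉ ≤ (k : ℤ) →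
          (k : ℝ) - i - 2 * d * k ≤ (degSeq R.inDeg (⌈(1 - β / 2) * (k : ℝ) - i⌉.toNat) : ℝ)))
    (hc : ∀ i : ℕ, 1 ≤ i → i ≤ k →
      (min ((i : ℝ) + β * k / 2) ((1 / 2 - 2 * d) * k) ≤ (degSeq R.inDeg i : ℝ)) ∨
        (1 ≤ ⌈(1 - β / 2) * (k : ℝ) - i⌉ → ⌈(1 - β / 2) * (k : ℝ) - i⌉ ≤ (k : ℤ) →
          (k : ℝ) - i - 2 * d * k ≤ (degSeq R.outDeg (⌈(1 - β / 2) * (k : ℝ) - i⌉.toNat) : ℝ))) :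
    ∀ S : Finset V, ((S.card : ℝ) ≤ (1 / 2 - 2 * d) * k ∨ (1 / 2 + 2 * d) * k < (S.card : ℝ)) →
      S.card ≤ (S.biUnion fun v => Finset.univ.filter fun u => R.Adj v u).card ∧
      S.card ≤ (S.biUnion fun v => Finset.univ.filter fun u => R.Adj u v).card := by
  have h1 := auxExpand R.Adj k hk d β hd hβ hβ1 hsmall
    (fun v => (hmin v).1) (fun v => (hmin v).2) hb hc
  letI I2 : DecidableRel (fun a b => R.Adj b a) := fun a b => ‹DecidableRel R.Adj› b a
  have h2 := auxExpand (fun a b => R.Adj b a) k hk d β hd hβ hβ1 hsmall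
    (fun v => (hmin v).2) (fun v => (hmin v).1) hc hb
  exact fun S hS => ⟨h1 S hS, h2 S hS⟩
end
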